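/- arXiv:1210.4964 — 4 statements merged into one kernel-verified Lean document; each statement's English description precedes it below -/
import Mathlib

section
/- Let F be a field of characteristic ≠ 2 and a, c ∈ F* with a not a square in F, and let L = F(√a) be a degree 2 extension of F containing a square root of both a and c (i.e., c is a square in L or this is the residue situation where F(√a,√c) = F(√a)). Define N : F⁴ → F by N(y₁,y₂,y₃,y₄) = (y₁² - a·y₂² + c·y₃² - a·c·y₄²)² - c·(2·y₁·y₃ - 2·a·y₂·y₄)². Then the set of nonzero values N(F⁴ \ {0}) ∩ F* equals the image of the field norm N_{L/F} : L* → F*. -/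
/-!
The quartic form is the norm form of the biquadratic algebra `F[√a, √c]`, computed through
`F[√c]`. Computing it through `F[√a] ≅ L` instead writes it as `N_{L/F}(u ^ 2 - c v ^ 2)` with
`u = y₁ + y₂√a` and `v = y₃ + y₄√a`. Conversely, since `c` has a square root in `L` and `2` is
invertible, every `z ∈ L` is `u ^ 2 - c v ^ 2 = (u + √c v)(u - √c v)`: solve
`u + √c v = z`, `u - √c v = 1`.
-/

section QuadraticAlgebra

variable {F L : Type*} [Field F] [CommRing L] [Algebra F L] {a : F} {s : L}

theorem linearIndependent_one_sqrt [Nontrivial L] (hnsq : ¬ ∃ r : F, r ^ 2 = a)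
    (hs : s ^ 2 = algebraMap F L a) : LinearIndependent F ![(1 : L), s] := by
  refine LinearIndependent.pair_iff.mpr fun x y hxy => ?_
  rw [Algebra.smul_def, Algebra.smul_def, mul_one] at hxy
  by_cases hy : y = 0
  · subst hy
    simpa using hxy
  · refine absurd ⟨-x / y, (algebraMap F L).injective ?_⟩ hnsq
    have hinv : algebraMap F L y⁻¹ * algebraMap F L y = 1 := by
      rw [← map_mul, inv_mul_cancel₀ hy, map_one]
    have hs' : s = algebraMap F L (-x / y) := by
      rw [div_eq_mul_inv, map_mul, map_neg]
      linear_combination algebraMap F L y⁻¹ * hxy - s * hinv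
    rw [map_pow, ← hs', hs]

variable (hli : LinearIndependent F ![(1 : L), s]) (hdeg : Module.finrank F L = 2)

noncomputable def basisOneSqrt : Module.Basis (Fin 2) F L :=
  basisOfLinearIndependentOfCardEqFinrank hli (by simp [hdeg])

@[simp]
theorem basisOneSqrt_zero : basisOneSqrt hli hdeg 0 = 1 := by
  simp [basisOneSqrt]

@[simp]
theorem basisOneSqrt_one : basisOneSqrt hli hdeg 1 = s := by
  simp [basisOneSqrt]

theorem basisOneSqrt_repr (x y : F) :
    (basisOneSqrt hli hdeg).repr (algebraMap F L x + algebraMap F L y * s) = ![x, y] := by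
  have : algebraMap F L x + algebraMap F L y * s =
      x • basisOneSqrt hli hdeg 0 + y • basisOneSqrt hli hdeg 1 := by
    simp [Algebra.smul_def]
  rw [this, map_add, map_smul, map_smul, Module.Basis.repr_self, Module.Basis.repr_self]
  ext i
  fin_cases i <;> simp

include hli hdeg in
theorem exists_algebraMap_add_mul_eq (z : L) :
    ∃ x y : F, algebraMap F L x + algebraMap F L y * s = z := by
  refine ⟨(basisOneSqrt hli hdeg).repr z 0, (basisOneSqrt hli hdeg).repr z 1, ?_⟩
  simpa [Fin.sum_univ_two, Algebra.smul_def] using (basisOneSqrt hli hdeg).sum_repr z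

include hli hdeg in
theorem norm_algebraMap_add_mul_sqrt (hs : s ^ 2 = algebraMap F L a) (x y : F) :
    Algebra.norm F (algebraMap F L x + algebraMap F L y * s) = x ^ 2 - a * y ^ 2 := by
  have hmul : (algebraMap F L x + algebraMap F L y * s) * s =
      algebraMap F L (a * y) + algebraMap F L x * s := by
    rw [map_mul]
    linear_combination algebraMap F L y * hs
  rw [Algebra.norm_eq_matrix_det (basisOneSqrt hli hdeg), Matrix.det_fin_two]
  simp only [Algebra.leftMulMatrix_eq_repr_mul, basisOneSqrt_zero, basisOneSqrt_one, mul_one,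
    hmul, basisOneSqrt_repr, Matrix.cons_val_zero, Matrix.cons_val_one]
  ring

include hli hdeg in
theorem norm_sq_sub_mul_sq (hs : s ^ 2 = algebraMap F L a) (c y₁ y₂ y₃ y₄ : F) :
    Algebra.norm F ((algebraMap F L y₁ + algebraMap F L y₂ * s) ^ 2
        - algebraMap F L c * (algebraMap F L y₃ + algebraMap F L y₄ * s) ^ 2) =
      (y₁ ^ 2 - a * y₂ ^ 2 + c * y₃ ^ 2 - a * c * y₄ ^ 2) ^ 2
        - c * (2 * y₁ * y₃ - 2 * a * y₂ * y₄) ^ 2 := by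
  have hexpand : (algebraMap F L y₁ + algebraMap F L y₂ * s) ^ 2
        - algebraMap F L c * (algebraMap F L y₃ + algebraMap F L y₄ * s) ^ 2 =
      algebraMap F L (y₁ ^ 2 + a * y₂ ^ 2 - c * y₃ ^ 2 - a * c * y₄ ^ 2)
        + algebraMap F L (2 * y₁ * y₂ - 2 * c * y₃ * y₄) * s := by
    simp only [map_add, map_sub, map_mul, map_pow, map_ofNat]
    linear_combination (algebraMap F L y₂ ^ 2 - algebraMap F L c * algebraMap F L y₄ ^ 2) * hs
  rw [hexpand, norm_algebraMap_add_mul_sqrt hli hdeg hs]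
  ring

end QuadraticAlgebra

theorem exists_sq_sub_mul_sq_eq {K : Type*} [Field K] (h2 : (2 : K) ≠ 0) {c s : K}
    (hs : s ^ 2 = c) (hc : c ≠ 0) (z : K) : ∃ u v : K, u ^ 2 - c * v ^ 2 = z := by
  have hs0 : s ≠ 0 := by rintro rfl; simp [← hs] at hc
  refine ⟨(z + 1) / 2, (z - 1) / (2 * s), ?_⟩
  rw [← hs]
  field_simp
  ring

theorem stmt1_general (F L : Type*) [Field F] [Field L] [Algebra F L]
    (hchar : (2 : F) ≠ 0) (a c : F) (hc : c ≠ 0)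
    (hnsq : ¬ ∃ s : F, s ^ 2 = a)
    (sa : L) (hsa : sa ^ 2 = algebraMap F L a)
    (hdeg : Module.finrank F L = 2)
    (hsc : ∃ sc : L, sc ^ 2 = algebraMap F L c) :
    {b : F | b ≠ 0 ∧ ∃ y₁ y₂ y₃ y₄ : F, ¬ (y₁ = 0 ∧ y₂ = 0 ∧ y₃ = 0 ∧ y₄ = 0) ∧
        (y₁ ^ 2 - a * y₂ ^ 2 + c * y₃ ^ 2 - a * c * y₄ ^ 2) ^ 2
          - c * (2 * y₁ * y₃ - 2 * a * y₂ * y₄) ^ 2 = b}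
      = {b : F | ∃ z : L, z ≠ 0 ∧ Algebra.norm F z = b} := by
  have hli := linearIndependent_one_sqrt hnsq hsa
  have : Module.Finite F L := Module.finite_of_finrank_pos (by omega)
  ext b
  constructor
  · rintro ⟨hb, y₁, y₂, y₃, y₄, -, rfl⟩
    rw [← norm_sq_sub_mul_sq hli hdeg hsa] at hb ⊢
    exact ⟨_, Algebra.norm_ne_zero_iff.mp hb, rfl⟩
  · rintro ⟨z, hz, rfl⟩
    obtain ⟨sc, hsc⟩ := hsc
    have h2 : (2 : L) ≠ 0 := by
      rw [← map_ofNat (algebraMap F L) 2]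
      exact (map_ne_zero _).mpr hchar
    obtain ⟨u, v, rfl⟩ := exists_sq_sub_mul_sq_eq h2 hsc ((map_ne_zero _).mpr hc) z
    obtain ⟨y₁, y₂, rfl⟩ := exists_algebraMap_add_mul_eq hli hdeg u
    obtain ⟨y₃, y₄, rfl⟩ := exists_algebraMap_add_mul_eq hli hdeg v
    refine ⟨Algebra.norm_ne_zero_iff.mpr hz, y₁, y₂, y₃, y₄, ?_,
      (norm_sq_sub_mul_sq hli hdeg hsa c y₁ y₂ y₃ y₄).symm⟩
    rintro ⟨rfl, rfl, rfl, rfl⟩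
    simp at hz

/-- for the degree-2 case `L = F(√a)`, the nonzero values of the quartic
form `N` are exactly the values of the field norm `N_{L/F}` on `L*`. -/
theorem stmt1 (F L : Type*) [Field F] [Field L] [Algebra F L]
    (hchar : (2 : F) ≠ 0) (a c : F) (ha : a ≠ 0) (hc : c ≠ 0)
    (hnsq : ¬ ∃ s : F, s ^ 2 = a)
    (sa : L) (hsa : sa ^ 2 = algebraMap F L a)
    (hgen : Algebra.adjoin F ({sa} : Set L) = ⊤)
    (hdeg : Module.finrank F L = 2)
    (hsc : ∃ sc : L, sc ^ 2 = algebraMap F L c) :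
    {b : F | b ≠ 0 ∧ ∃ y₁ y₂ y₃ y₄ : F, ¬ (y₁ = 0 ∧ y₂ = 0 ∧ y₃ = 0 ∧ y₄ = 0) ∧
        (y₁ ^ 2 - a * y₂ ^ 2 + c * y₃ ^ 2 - a * c * y₄ ^ 2) ^ 2
          - c * (2 * y₁ * y₃ - 2 * a * y₂ * y₄) ^ 2 = b}
      = {b : F | ∃ z : L, z ≠ 0 ∧ Algebra.norm F z = b} :=
  stmt1_general F L hchar a c hc hnsq sa hsa hdeg hsc
end

section
/- Let F be a field of characteristic ≠ 2 and a, c ∈ F* both squares in F. Define N : F⁴ → F by N(y₁,y₂,y₃,y₄) = (y₁² - a·y₂² + c·y₃² - a·c·y₄²)² - c·(2·y₁·y₃ - 2·a·y₂·y₄)². Then N restricted to F⁴ \ {0} attains every value in F*; that is, N(F⁴ \ {0}) ⊇ F*. -/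
/-!
With `a = s²` and `c = t²` the form splits as
`N = ((y₁ - t y₃)² - s² (y₂ - t y₄)²) · ((y₁ + t y₃)² - s² (y₂ + t y₄)²)`,
a product of four linear forms `(y₁ ± t y₃) ± s (y₂ ± t y₄)`. Since `2 s t ≠ 0` these are linearly
independent, so they can be made to take the values `b, 1, 1, 1`; the resulting vector is nonzero
because `N 0 = 0 ≠ b`.
-/

theorem exists_sub_mul_eq_and_add_mul_eq {F : Type*} [Field F] (h2 : (2 : F) ≠ 0) {s : F}
    (hs : s ≠ 0) (u v : F) : ∃ x y : F, x - s * y = u ∧ x + s * y = v :=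
  ⟨(u + v) / 2, (v - u) / (2 * s), by field_simp; ring, by field_simp; ring⟩

theorem quartic_form_sq_sq_eq_mul {R : Type*} [CommRing R] (s t y₁ y₂ y₃ y₄ : R) :
    (y₁ ^ 2 - s ^ 2 * y₂ ^ 2 + t ^ 2 * y₃ ^ 2 - s ^ 2 * t ^ 2 * y₄ ^ 2) ^ 2
        - t ^ 2 * (2 * y₁ * y₃ - 2 * s ^ 2 * y₂ * y₄) ^ 2
      = ((y₁ - t * y₃) ^ 2 - s ^ 2 * (y₂ - t * y₄) ^ 2)
        * ((y₁ + t * y₃) ^ 2 - s ^ 2 * (y₂ + t * y₄) ^ 2) := by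
  ring

/-- if `a` and `c` are both squares in `F`, the quartic form `N`
attains every nonzero value of `F` on `F⁴ \ {0}`. -/
theorem stmt2 (F : Type*) [Field F] (hchar : (2 : F) ≠ 0)
    (a c : F) (ha : a ≠ 0) (hc : c ≠ 0)
    (hsa : ∃ s : F, s ^ 2 = a) (hsc : ∃ t : F, t ^ 2 = c) :
    ∀ b : F, b ≠ 0 → ∃ y₁ y₂ y₃ y₄ : F, ¬ (y₁ = 0 ∧ y₂ = 0 ∧ y₃ = 0 ∧ y₄ = 0) ∧
      (y₁ ^ 2 - a * y₂ ^ 2 + c * y₃ ^ 2 - a * c * y₄ ^ 2) ^ 2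
        - c * (2 * y₁ * y₃ - 2 * a * y₂ * y₄) ^ 2 = b := by
  obtain ⟨s, rfl⟩ := hsa
  obtain ⟨t, rfl⟩ := hsc
  intro b hb
  have hs : s ≠ 0 := pow_ne_zero_iff two_ne_zero |>.mp ha
  have ht : t ≠ 0 := pow_ne_zero_iff two_ne_zero |>.mp hc
  obtain ⟨p, q, hp, hq⟩ := exists_sub_mul_eq_and_add_mul_eq hchar hs b 1
  obtain ⟨y₁, y₃, h₁, h₃⟩ := exists_sub_mul_eq_and_add_mul_eq hchar ht p 1
  obtain ⟨y₂, y₄, h₂, h₄⟩ := exists_sub_mul_eq_and_add_mul_eq hchar ht q 0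
  have hN : (y₁ ^ 2 - s ^ 2 * y₂ ^ 2 + t ^ 2 * y₃ ^ 2 - s ^ 2 * t ^ 2 * y₄ ^ 2) ^ 2
      - t ^ 2 * (2 * y₁ * y₃ - 2 * s ^ 2 * y₂ * y₄) ^ 2 = b := by
    rw [quartic_form_sq_sq_eq_mul, h₁, h₂, h₃, h₄]
    linear_combination (p + s * q) * hp + b * hq
  refine ⟨y₁, y₂, y₃, y₄, ?_, hN⟩
  rintro ⟨rfl, rfl, rfl, rfl⟩
  exact hb (by simpa using hN.symm)
end

section
/- Conversely, let G be a group and a, b, c : G → ℤ/2 group homomorphisms. Suppose there exist functions E_{ab}, E_{bc}, F : G → ℤ/2 satisfying for all g,h: E_{ab}(gh) = E_{ab}(g) + E_{ab}(h) + a(g)·b(h), E_{bc}(gh) = E_{bc}(g) + E_{bc}(h) + b(g)·c(h), and F(gh) = F(g) + F(h) + a(g)·E_{bc}(h) + E_{ab}(g)·c(h). Then the map φ : G → U₄ defined by a₁₂∘φ = a, a₂₃∘φ = b, a₃₄∘φ = c, a₁₃∘φ = E_{ab}, a₂₄∘φ = E_{bc}, a₁₄∘φ = F is a group homomorphism. 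-/
theorem Matrix.upperUnitriangular_fin_four_mul {R : Type*} [Semiring R]
    (a b c e f x a' b' c' e' f' x' : R) :
    !![1, a, e, x; 0, 1, b, f; 0, 0, 1, c; 0, 0, 0, 1]
        * !![1, a', e', x'; 0, 1, b', f'; 0, 0, 1, c'; 0, 0, 0, 1]
      = !![1, a + a', e + e' + a * b', x + x' + a * f' + e * c';
           0, 1, b + b', f + f' + b * c';
           0, 0, 1, c + c';
           0, 0, 0, 1] := by
  ext i j
  fin_cases i <;> fin_cases j <;> simp [Matrix.mul_apply, Fin.sum_univ_four] <;> abel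

/-- homomorphisms `a, b, c : G → ℤ/2` together with cochains
`E_{ab}, E_{bc}, F` satisfying the cocycle conditions assemble into a group
homomorphism `φ : G → U₄`. -/
theorem stmt13 (G : Type*) [Group G]
    (a b c Eab Ebc Fm : G → ZMod 2)
    (ha : ∀ g h, a (g * h) = a g + a h)
    (hb : ∀ g h, b (g * h) = b g + b h)
    (hc : ∀ g h, c (g * h) = c g + c h)
    (hEab : ∀ g h, Eab (g * h) = Eab g + Eab h + a g * b h)
    (hEbc : ∀ g h, Ebc (g * h) = Ebc g + Ebc h + b g * c h)
    (hFm : ∀ g h, Fm (g * h) = Fm g + Fm h + a g * Ebc h + Eab g * c h) :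
    ∀ g h : G,
      (!![1, a (g * h), Eab (g * h), Fm (g * h);
          0, 1, b (g * h), Ebc (g * h);
          0, 0, 1, c (g * h);
          0, 0, 0, 1] : Matrix (Fin 4) (Fin 4) (ZMod 2))
        = !![1, a g, Eab g, Fm g; 0, 1, b g, Ebc g; 0, 0, 1, c g; 0, 0, 0, 1]
          * !![1, a h, Eab h, Fm h; 0, 1, b h, Ebc h; 0, 0, 1, c h; 0, 0, 0, 1] := by
  intro g h
  rw [Matrix.upperUnitriangular_fin_four_mul, ha, hb, hc, hEab, hEbc, hFm]
end

section
/- Let F be a field of characteristic ≠ 2 and a, b ∈ F* with a a nonsquare, L = F(√a). If b lies in F*²·N_{L/F}(L*), then the variety X(a,b,a) given by b·x² = (y₁² − a·y₂² + a·y₃² − a²·y₄²)² − a·(2·y₁·y₃ − 2·a·y₂·y₄)² with x ≠ 0 has an F-point. (This underlies the vanishing of the symmetric triple Massey product ⟨κ(a), κ(b), κ(a)⟩.) -/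
/-!
Write `b = t² N(w)`. The quartic form is `N(γ² - a δ²)` with `γ = y₁ + y₃√a`, `δ = y₂ + y₄√a`, and
`γ² - a δ² = (γ - √a δ)(γ + √a δ)` takes the value `w` at `γ - √a δ = 1`, `γ + √a δ = w`; so
`x = 1/t` gives a point. Norms from `L` are computed through `L ≅ F[X]/(X² - a)`.
-/

namespace QuadraticAlgebra

variable {F L : Type*} [Field F] [Ring L] [Nontrivial L] [Algebra F L] {a : F}

theorem algebra_norm_eq_norm (z : QuadraticAlgebra F a 0) : Algebra.norm F z = z.norm :=
  det_toLinearMap_eq_norm z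

noncomputable def algEquivOfSqEq (hnsq : ¬ ∃ r : F, r ^ 2 = a) {s : L}
    (hs : s ^ 2 = algebraMap F L a) (hdeg : Module.finrank F L = 2) :
    QuadraticAlgebra F a 0 ≃ₐ[F] L :=
  -- this instance makes `QuadraticAlgebra F a 0` a field, so `φ` below is injective
  haveI : Fact (∀ r : F, r ^ 2 ≠ a + 0 * r) := ⟨by simpa using not_exists.mp hnsq⟩
  let φ : QuadraticAlgebra F a 0 →ₐ[F] L :=
    lift ⟨s, by rw [← sq, hs, zero_smul, add_zero, Algebra.algebraMap_eq_smul_one]⟩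
  have hinj : Function.Injective φ := φ.toRingHom.injective
  haveI := Module.finite_of_finrank_eq_succ hdeg
  AlgEquiv.ofBijective φ ⟨hinj, (LinearMap.injective_iff_surjective_of_finrank_eq_finrank
    (by rw [finrank_eq_two, hdeg]) (f := φ.toLinearMap)).mp hinj⟩

end QuadraticAlgebra

theorem Algebra.exists_norm_eq_sq_sub_mul_sq {F L : Type*} [Field F] [Ring L] [Nontrivial L]
    [Algebra F L] {a : F} (hnsq : ¬ ∃ r : F, r ^ 2 = a) {s : L}
    (hs : s ^ 2 = algebraMap F L a) (hdeg : Module.finrank F L = 2) (w : L) :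
    ∃ p q : F, Algebra.norm F w = p ^ 2 - a * q ^ 2 := by
  obtain ⟨z, rfl⟩ := (QuadraticAlgebra.algEquivOfSqEq hnsq hs hdeg).surjective w
  refine ⟨z.re, z.im, ?_⟩
  rw [Algebra.norm_eq_of_algEquiv, QuadraticAlgebra.algebra_norm_eq_norm, QuadraticAlgebra.norm_def]
  ring

theorem exists_quartic_eq_sq_sub_mul_sq {F : Type*} [Field F] {a : F} (h2 : (2 : F) ≠ 0)
    (ha : a ≠ 0) (p q : F) : ∃ y₁ y₂ y₃ y₄ : F,
      (y₁ ^ 2 - a * y₂ ^ 2 + a * y₃ ^ 2 - a ^ 2 * y₄ ^ 2) ^ 2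
        - a * (2 * y₁ * y₃ - 2 * a * y₂ * y₄) ^ 2 = p ^ 2 - a * q ^ 2 :=
  -- `γ = (w + 1)/2`, `δ = (w - 1)/(2√a)` for `w = p + q√a`
  ⟨(p + 1) / 2, q / 2, q / 2, (p - 1) / (2 * a), by field_simp; ring⟩

theorem stmt16_general (F L : Type*) [Field F] [Field L] [Algebra F L]
    (hchar : (2 : F) ≠ 0) (a b : F) (ha : a ≠ 0)
    (hnsq : ¬ ∃ s : F, s ^ 2 = a)
    (sa : L) (hsa : sa ^ 2 = algebraMap F L a)
    (hdeg : Module.finrank F L = 2)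
    (hbnorm : ∃ t : F, t ≠ 0 ∧ ∃ w : L, w ≠ 0 ∧ b = t ^ 2 * Algebra.norm F w) :
    ∃ x y₁ y₂ y₃ y₄ : F, x ≠ 0 ∧
      b * x ^ 2 = (y₁ ^ 2 - a * y₂ ^ 2 + a * y₃ ^ 2 - a ^ 2 * y₄ ^ 2) ^ 2
        - a * (2 * y₁ * y₃ - 2 * a * y₂ * y₄) ^ 2 := by
  obtain ⟨t, ht, w, -, rfl⟩ := hbnorm
  obtain ⟨p, q, hnorm⟩ := Algebra.exists_norm_eq_sq_sub_mul_sq hnsq hsa hdeg w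
  obtain ⟨y₁, y₂, y₃, y₄, hy⟩ := exists_quartic_eq_sq_sub_mul_sq hchar ha p q
  refine ⟨t⁻¹, y₁, y₂, y₃, y₄, inv_ne_zero ht, ?_⟩
  rw [hy, hnorm]
  field_simp

/-- for `a` a nonsquare and `L = F(√a)`, if `b ∈ F*²·N_{L/F}(L*)`
then the variety `X(a,b,a)` (the specialization `c = a`) has an `F`-point. -/
theorem stmt16 (F L : Type*) [Field F] [Field L] [Algebra F L]
    (hchar : (2 : F) ≠ 0) (a b : F) (ha : a ≠ 0) (hb : b ≠ 0)
    (hnsq : ¬ ∃ s : F, s ^ 2 = a)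
    (sa : L) (hsa : sa ^ 2 = algebraMap F L a)
    (hgen : Algebra.adjoin F ({sa} : Set L) = ⊤)
    (hdeg : Module.finrank F L = 2)
    (hbnorm : ∃ t : F, t ≠ 0 ∧ ∃ w : L, w ≠ 0 ∧ b = t ^ 2 * Algebra.norm F w) :
    ∃ x y₁ y₂ y₃ y₄ : F, x ≠ 0 ∧
      b * x ^ 2 = (y₁ ^ 2 - a * y₂ ^ 2 + a * y₃ ^ 2 - a ^ 2 * y₄ ^ 2) ^ 2
        - a * (2 * y₁ * y₃ - 2 * a * y₂ * y₄) ^ 2 :=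
  stmt16_general F L hchar a b ha hnsq sa hsa hdeg hbnorm
end
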